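/- arXiv:2101.03863 — 7 statements merged into one kernel-verified Lean document; each statement's English description precedes it below -/
import Mathlib

section
/- If a weight matrix W can be rescaled into a symmetric matrix by a positive vector a, then W is transitive: for every m ≥ 3 and all pairwise distinct indices i_1,…,i_m, the product w_{i_1 i_2} w_{i_2 i_3} ⋯ w_{i_{m-1} i_m} w_{i_m i_1} equals the reverse product w_{i_1 i_m} w_{i_m i_{m-1}} ⋯ w_{i_2 i_1}. -/
/-- If W can be rescaled into a symmetric matrix by a positive
vector, then W is transitive: every cyclic product over (m ≥ 3) pairwise
distinct indices equals the reverse cyclic product. -/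
theorem stmt2 {n : ℕ} (w : Fin n → Fin n → ℝ) (a : Fin n → ℝ) (ha : ∀ i, 0 < a i)
    (hsym : ∀ i j, w i j * a i / a j = w j i * a j / a i)
    (m : ℕ) (idx : Fin (m + 3) → Fin n) (hinj : Function.Injective idx) :
    ∏ k : Fin (m + 3), w (idx k) (idx (k + 1)) =
      ∏ k : Fin (m + 3), w (idx (k + 1)) (idx k) := by
  have key : ∀ k : Fin (m + 3),
      w (idx k) (idx (k + 1)) * (a (idx k))^2
        = w (idx (k + 1)) (idx k) * (a (idx (k + 1)))^2 := by
    intro k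
    have h := hsym (idx k) (idx (k + 1))
    have h1 := (ha (idx k)).ne'
    have h2 := (ha (idx (k + 1))).ne'
    field_simp at h
    nlinarith [h]
  have hprod : (∏ k : Fin (m + 3), w (idx k) (idx (k + 1)))
      * ∏ k : Fin (m + 3), (a (idx k))^2
      = (∏ k : Fin (m + 3), w (idx (k + 1)) (idx k))
      * ∏ k : Fin (m + 3), (a (idx (k + 1)))^2 := by
    rw [← Finset.prod_mul_distrib, ← Finset.prod_mul_distrib]
    exact Finset.prod_congr rfl fun k _ => key k
  have hshift : ∏ k : Fin (m + 3), (a (idx (k + 1)))^2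
      = ∏ k : Fin (m + 3), (a (idx k))^2 := by
    exact Fintype.prod_equiv (Equiv.addRight (1 : Fin (m + 3)))
      _ _ (fun k => rfl)
  rw [hshift] at hprod
  have hne : (∏ k : Fin (m + 3), (a (idx k))^2) ≠ 0 :=
    Finset.prod_ne_zero_iff.mpr fun k _ => pow_ne_zero _ (ha (idx k)).ne'
  exact mul_right_cancel₀ hne hprod
end

section
/- If W ∈ ℝ^{n×n} with w_{ii} = 1 is transitive and sign-symmetric, then there exists a positive scaling vector a ∈ ℝ^n such that the rescaled matrix V with v_{ij} = w_{ij} a_i/a_j is symmetric; moreover one can take v_{ij} = sgn(w_{ij}) √|w_{ij} w_{ji}|. -/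
namespace Stmt3Aux

open SimpleGraph

variable {n : ℕ}

/-- The graph whose edges are the pairs with nonzero weights. -/
@[reducible]
def G (w : Fin n → Fin n → ℝ) : SimpleGraph (Fin n) where
  Adj i j := i ≠ j ∧ w i j ≠ 0 ∧ w j i ≠ 0
  symm := ⟨fun i j ⟨h1, h2, h3⟩ => ⟨h1.symm, h3, h2⟩⟩
  loopless := ⟨fun i ⟨h, _, _⟩ => h rfl⟩

/-- The multiplier along a dart from `i` to `j`. -/
noncomputable def f (w : Fin n → Fin n → ℝ) (i j : Fin n) : ℝ :=
  Real.sqrt |w i j| / Real.sqrt |w j i|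

noncomputable def F (w : Fin n → Fin n → ℝ) (d : (G w).Dart) : ℝ :=
  f w d.toProd.1 d.toProd.2

/-- Product of the multipliers along a walk. -/
noncomputable def wprod (w : Fin n → Fin n → ℝ) {u v : Fin n}
    (p : (G w).Walk u v) : ℝ :=
  (p.darts.map (F w)).prod

lemma f_pos (w : Fin n → Fin n → ℝ) {i j : Fin n} (h1 : w i j ≠ 0) (h2 : w j i ≠ 0) :
    0 < f w i j :=
  div_pos (Real.sqrt_pos.2 (abs_pos.2 h1)) (Real.sqrt_pos.2 (abs_pos.2 h2))

lemma f_mul (w : Fin n → Fin n → ℝ) {i j : Fin n} (h1 : w i j ≠ 0) (h2 : w j i ≠ 0) :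
    f w i j * f w j i = 1 := by
  have s1 := Real.sqrt_pos.2 (abs_pos.2 h1)
  have s2 := Real.sqrt_pos.2 (abs_pos.2 h2)
  unfold f
  field_simp [f]

lemma wprod_pos (w : Fin n → Fin n → ℝ) {u v : Fin n} (p : (G w).Walk u v) :
    0 < wprod w p := by
  apply List.prod_pos
  intro x hx
  obtain ⟨d, _, rfl⟩ := List.mem_map.1 hx
  exact f_pos w d.adj.2.1 d.adj.2.2

lemma wprod_nil (w : Fin n → Fin n → ℝ) {u : Fin n} :
    wprod w (Walk.nil : (G w).Walk u u) = 1 := by simp [wprod]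

lemma wprod_cons (w : Fin n → Fin n → ℝ) {u v x : Fin n} (h : (G w).Adj u v)
    (p : (G w).Walk v x) : wprod w (Walk.cons h p) = f w u v * wprod w p := by
  simp [wprod, Walk.darts_cons, F]

lemma wprod_append (w : Fin n → Fin n → ℝ) {u v x : Fin n} (p : (G w).Walk u v)
    (q : (G w).Walk v x) : wprod w (p.append q) = wprod w p * wprod w q := by
  simp [wprod, Walk.darts_append]

lemma wprod_copy (w : Fin n → Fin n → ℝ) {u v u' v' : Fin n} (p : (G w).Walk u v)
    (hu : u = u') (hv : v = v') : wprod w (p.copy hu hv) = wprod w p := by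
  subst hu; subst hv; rfl

lemma wprod_reverse (w : Fin n → Fin n → ℝ) {u v : Fin n} (p : (G w).Walk u v) :
    wprod w p.reverse * wprod w p = 1 := by
  induction p with
  | nil => simp [wprod]
  | cons h q ih =>
    rw [Walk.reverse_cons, wprod_append, wprod_cons, wprod_cons, wprod_nil]
    have h2 := f_mul w h.2.2 h.2.1
    linear_combination (wprod w q.reverse * wprod w q) * h2 + ih

lemma sign_mul_abs (x : ℝ) : Real.sign x * |x| = x := by
  rcases lt_trichotomy x 0 with h | h | h
  · rw [Real.sign_of_neg h, abs_of_neg h]; ring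
  · simp [h]
  · rw [Real.sign_of_pos h, abs_of_pos h]; ring

/-- Product of `f` around a simple cycle is 1, via the transitivity hypothesis. -/
lemma cycle_f_prod (w : Fin n → Fin n → ℝ)
    (htrans : ∀ (m : ℕ) (idx : Fin (m + 3) → Fin n), Function.Injective idx →
      ∏ k : Fin (m + 3), w (idx k) (idx (k + 1)) =
        ∏ k : Fin (m + 3), w (idx (k + 1)) (idx k))
    (m₀ : ℕ) (idx : Fin (m₀ + 3) → Fin n) (hinj : Function.Injective idx)
    (hnz : ∀ k : Fin (m₀ + 3), w (idx k) (idx (k + 1)) ≠ 0)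
    (hnz' : ∀ k : Fin (m₀ + 3), w (idx (k + 1)) (idx k) ≠ 0) :
    ∏ k : Fin (m₀ + 3), f w (idx k) (idx (k + 1)) = 1 := by
  have key := htrans m₀ idx hinj
  have habs : ∏ k : Fin (m₀ + 3), |w (idx k) (idx (k + 1))| =
      ∏ k : Fin (m₀ + 3), |w (idx (k + 1)) (idx k)| := by
    rw [← Finset.abs_prod, ← Finset.abs_prod, key]
  set P := ∏ k : Fin (m₀ + 3), f w (idx k) (idx (k + 1)) with hP
  have hPpos : 0 < P :=
    Finset.prod_pos fun k _ => f_pos w (hnz k) (hnz' k)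
  have hsq : P ^ 2 = 1 := by
    rw [hP, ← Finset.prod_pow]
    have : ∀ k : Fin (m₀ + 3), f w (idx k) (idx (k + 1)) ^ 2 =
        |w (idx k) (idx (k + 1))| / |w (idx (k + 1)) (idx k)| := by
      intro k
      rw [f, div_pow, Real.sq_sqrt (abs_nonneg _), Real.sq_sqrt (abs_nonneg _)]
    rw [Finset.prod_congr rfl fun k _ => this k, Finset.prod_div_distrib, habs]
    apply div_self
    exact Finset.prod_ne_zero_iff.2 fun k _ => abs_ne_zero.2 (hnz' k)
  have h0 : (P - 1) * (P + 1) = 0 := by linear_combination hsq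
  rcases mul_eq_zero.1 h0 with h | h
  · linarith
  · linarith

lemma list_prod_map_fin {α : Type*} (F : α → ℝ) (l : List α) {m : ℕ} (h : l.length = m) :
    (l.map F).prod = ∏ k : Fin m, F (l[(k : ℕ)]'(by omega)) := by
  subst h
  conv_lhs => rw [← List.ofFn_get l, List.map_ofFn, List.prod_ofFn]
  rfl

/-- The product of `f` around any closed walk whose interior support is nodup
(i.e. a simple cycle, or short closed walk) equals 1. -/
lemma cycle_case (w : Fin n → Fin n → ℝ)
    (htrans : ∀ (m : ℕ) (idx : Fin (m + 3) → Fin n), Function.Injective idx →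
      ∏ k : Fin (m + 3), w (idx k) (idx (k + 1)) =
        ∏ k : Fin (m + 3), w (idx (k + 1)) (idx k))
    {u : Fin n} (p : (G w).Walk u u) (hd : p.support.tail.Nodup) :
    wprod w p = 1 := by
  rcases Nat.lt_or_ge p.length 3 with h3 | h3
  · -- short cases
    cases p with
    | nil => simp [wprod]
    | cons h q =>
      cases q with
      | nil => exact absurd rfl h.1
      | cons h' r =>
        cases r with
        | nil =>
          rw [wprod_cons, wprod_cons, wprod_nil, mul_one]
          exact f_mul w h.2.1 h.2.2
        | cons h'' r' =>
          exfalso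
          simp only [Walk.length_cons] at h3
          omega
  · -- the genuine cycle case
    obtain ⟨m₀, hm⟩ : ∃ m₀, p.length = m₀ + 3 := ⟨p.length - 3, by omega⟩
    have hD : p.darts.length = m₀ + 3 := by rw [Walk.length_darts, hm]
    have hs : p.support.tail.length = m₀ + 3 := by
      have := Walk.length_support p
      have ht : p.support.tail.length = p.support.length - 1 := by
        simp [List.length_tail]
      omega
    set s := p.support.tail with hsdef
    let idx : Fin (m₀ + 3) → Fin n := fun k => s[(k : ℕ)]'(by omega)
    let dget : Fin (m₀ + 3) → (G w).Dart := fun k => p.darts[(k : ℕ)]'(by omega)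
    have h_snd : ∀ k : Fin (m₀ + 3), (dget k).toProd.2 = idx k := by
      intro k
      have hmap := Walk.map_snd_darts p
      have : s[(k : ℕ)]'(by omega) = (p.darts.map (·.toProd.2))[(k : ℕ)]'(by
          rw [List.length_map]; omega) := by
        exact (List.getElem_of_eq hmap _).symm
      rw [List.getElem_map] at this
      exact this.symm
    have h_fst0 : (p.darts[0]'(by omega)).toProd.1 = u := by
      have hmap := Walk.map_fst_darts p
      have h1 : (p.darts.map (·.toProd.1))[0]'(by rw [List.length_map]; omega) =
          p.support.dropLast[0]'(by rw [hmap.symm] at *; rw [← hmap]; rw [List.length_map]; omega) := by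
        exact List.getElem_of_eq hmap _
      rw [List.getElem_map] at h1
      rw [h1, List.getElem_dropLast]
      have hse := Walk.support_eq_cons p
      exact (List.getElem_of_eq hse _).trans (by simp)
    have h_chain : ∀ (k : ℕ) (hk : k + 1 < m₀ + 3),
        (p.darts[k + 1]'(by omega)).toProd.1 = (p.darts[k]'(by omega)).toProd.2 := by
      intro k hk
      have hc := Walk.isChain_dartAdj_darts p
      rw [List.isChain_iff_getElem] at hc
      have := hc k (by omega)
      exact this.symm
    have h_last : idx (Fin.last (m₀ + 2)) = u := by
      show s[(m₀ + 2 : ℕ)]'(by omega) = u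
      have hne : s ≠ [] := by intro h; rw [h] at hs; simp at hs
      have h1 : s.getLast hne = s[s.length - 1]'(by omega) := List.getLast_eq_getElem _
      have h2 : s.getLast hne = u :=
        (List.getLast_tail hne).trans (Walk.getLast_support p)
      have h3 : s.length - 1 = m₀ + 2 := by omega
      have h4 : s[(m₀ + 2 : ℕ)]'(by omega) = s[s.length - 1]'(by omega) :=
        getElem_congr_idx h3.symm
      exact h4.trans (h1.symm.trans h2)
    have hcyc : ∀ k : Fin (m₀ + 3), (dget (k + 1)).toProd.1 = idx k := by
      intro k
      by_cases hk : k = Fin.last (m₀ + 2)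
      · subst hk
        rw [Fin.last_add_one]
        rw [h_last]
        exact h_fst0
      · have hklt : (k : ℕ) < m₀ + 2 := by
          by_contra hcon
          exact hk (Fin.ext (by simp only [Fin.val_last]; omega))
        have hv : ((k + 1 : Fin (m₀ + 3)) : ℕ) = (k : ℕ) + 1 :=
          Fin.val_add_one_of_lt (Fin.lt_last_iff_ne_last.2 hk)
        have he : dget (k + 1) = p.darts[(k : ℕ) + 1]'(by omega) := getElem_congr_idx hv
        rw [he, h_chain (k : ℕ) (by omega)]
        exact h_snd k
    have hadj : ∀ k : Fin (m₀ + 3), (G w).Adj (idx k) (idx (k + 1)) := by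
      intro k
      have := (dget (k + 1)).adj
      rwa [hcyc k, h_snd (k + 1)] at this
    have hinj : Function.Injective idx := by
      intro a b hab
      have hd' : s.Nodup := hd
      have := List.nodup_iff_injective_getElem.1 hd'
        (show s[((⟨(a : ℕ), by omega⟩ : Fin s.length) : ℕ)] =
            s[((⟨(b : ℕ), by omega⟩ : Fin s.length) : ℕ)] from hab)
      have hv : (a : ℕ) = (b : ℕ) := by simpa using this
      exact Fin.ext hv
    have step1 : wprod w p = ∏ k : Fin (m₀ + 3), F w (dget k) :=
      list_prod_map_fin (F w) p.darts hD
    have step2 : ∏ k : Fin (m₀ + 3), F w (dget k) =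
        ∏ k : Fin (m₀ + 3), F w (dget (k + 1)) :=
      (Equiv.prod_comp (Equiv.addRight (1 : Fin (m₀ + 3))) fun k => F w (dget k)).symm
    have step3 : ∀ k : Fin (m₀ + 3), F w (dget (k + 1)) = f w (idx k) (idx (k + 1)) := by
      intro k
      rw [F, hcyc k, h_snd (k + 1)]
    rw [step1, step2, Finset.prod_congr rfl fun k _ => step3 k]
    exact cycle_f_prod w htrans m₀ idx hinj (fun k => (hadj k).2.1) (fun k => (hadj k).2.2)

/-- Any closed walk has `wprod` equal to 1. -/
lemma closed_wprod (w : Fin n → Fin n → ℝ)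
    (htrans : ∀ (m : ℕ) (idx : Fin (m + 3) → Fin n), Function.Injective idx →
      ∏ k : Fin (m + 3), w (idx k) (idx (k + 1)) =
        ∏ k : Fin (m + 3), w (idx (k + 1)) (idx k)) :
    ∀ (N : ℕ) {u : Fin n} (p : (G w).Walk u u), p.length ≤ N → wprod w p = 1 := by
  intro N
  induction N with
  | zero =>
    intro u p hp
    have h0 : p.length = 0 := Nat.le_zero.1 hp
    have : p.Nil := Walk.nil_iff_length_eq.2 h0
    cases p with
    | nil => simp [wprod]
    | cons h q => simp at this
  | succ N ih =>
    intro u p hp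
    by_cases hd : p.support.tail.Nodup
    · exact cycle_case w htrans p hd
    · obtain ⟨x, hx⟩ := List.exists_duplicate_iff_not_nodup.2 hd
      have hcount : 2 ≤ p.support.tail.count x := List.duplicate_iff_two_le_count.1 hx
      have hxs : x ∈ p.support := by
        rw [Walk.support_eq_cons]
        exact List.mem_cons_of_mem _ hx.mem
      have hqrot := Walk.rotate_darts p x hxs
      have hq : wprod w (p.rotate x hxs) = wprod w p :=
        ((hqrot.map (F w)).perm).prod_eq
      have hqlen : (p.rotate x hxs).length = p.length := by
        have := hqrot.perm.length_eq
        rwa [Walk.length_darts, Walk.length_darts] at this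
      have hqc : 2 ≤ (p.rotate x hxs).support.tail.count x := by
        rw [(Walk.support_rotate p x hxs).perm.count_eq]
        exact hcount
      -- the rotated walk q starts and ends at x and visits x in between
      set q : (G w).Walk x x := p.rotate x hxs with hqdef
      have hnotnil : ¬q.Nil := by
        intro hnil
        have h0 : q.length = 0 := Walk.nil_iff_length_eq.1 hnil
        have : q.support.tail.length = 0 := by
          have := Walk.length_support q
          simp only [List.length_tail, this, h0]
        rw [List.length_eq_zero_iff] at this
        rw [this] at hqc
        simp at hqc
      obtain ⟨y, hadj, r, hq_eq⟩ := Walk.not_nil_iff.1 hnotnil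
      have hxy : x ≠ y := hadj.ne
      have hsup : q.support.tail = r.support := by rw [hq_eq]; simp
      have hcr : 2 ≤ r.support.count x := by rwa [← hsup]
      have hxr : x ∈ r.support := by
        rw [← List.count_pos_iff]
        omega
      have hspec := Walk.take_spec r hxr
      set r₁ := r.takeUntil x hxr with hr₁
      set r₂ := r.dropUntil x hxr with hr₂
      have hcount1 : r₁.support.count x = 1 := Walk.count_support_takeUntil_eq_one r hxr
      have hcsplit : r.support.count x = r₁.support.count x + r₂.support.tail.count x := by
        rw [← hspec, Walk.support_append, List.count_append]
      have hr₂tail : 1 ≤ r₂.support.tail.count x := by omega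
      have hr₂len : 1 ≤ r₂.length := by
        by_contra hcon
        have h0 : r₂.length = 0 := by omega
        have : r₂.support.tail.length = 0 := by
          have := Walk.length_support r₂
          simp only [List.length_tail, this, h0]
        rw [List.length_eq_zero_iff] at this
        rw [this] at hr₂tail
        simp at hr₂tail
      have hlen_r : r₁.length + r₂.length = r.length := by
        rw [← hspec, Walk.length_append]
      have hqlen2 : q.length = r.length + 1 := by rw [hq_eq]; simp
      have hplen : p.length ≤ N + 1 := hp
      -- decompose the product
      have hw1 : wprod w (Walk.cons hadj r₁) = 1 := by
        apply ih
        have : (Walk.cons hadj r₁).length = r₁.length + 1 := by simp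
        omega
      have hw2 : wprod w r₂ = 1 := by
        apply ih
        omega
      have : wprod w q = wprod w (Walk.cons hadj r₁) * wprod w r₂ := by
        rw [hq_eq]
        conv_lhs => rw [← hspec]
        rw [wprod_cons, wprod_append, wprod_cons]
        ring
      rw [← hq, this, hw1, hw2, mul_one]

lemma wprod_eq (w : Fin n → Fin n → ℝ)
    (htrans : ∀ (m : ℕ) (idx : Fin (m + 3) → Fin n), Function.Injective idx →
      ∏ k : Fin (m + 3), w (idx k) (idx (k + 1)) =
        ∏ k : Fin (m + 3), w (idx (k + 1)) (idx k))
    {u v : Fin n} (p q : (G w).Walk u v) : wprod w p = wprod w q := by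
  have h1 : wprod w (p.append q.reverse) = 1 :=
    closed_wprod w htrans _ _ le_rfl
  rw [wprod_append] at h1
  have h2 := wprod_reverse w q
  have h3 := (wprod_pos w q.reverse).ne'
  exact mul_left_cancel₀ h3 (by linear_combination h1 - h2)

end Stmt3Aux

/-- If W (unit diagonal) is transitive and sign-symmetric, then
there is a positive scaling vector making the rescaled matrix symmetric, with
rescaled entries `sgn(w_ij) √|w_ij w_ji|`. -/
theorem stmt3 {n : ℕ} (w : Fin n → Fin n → ℝ) (hdiag : ∀ i, w i i = 1)
    (htrans : ∀ (m : ℕ) (idx : Fin (m + 3) → Fin n), Function.Injective idx →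
      ∏ k : Fin (m + 3), w (idx k) (idx (k + 1)) =
        ∏ k : Fin (m + 3), w (idx (k + 1)) (idx k))
    (hsign : ∀ i j, Real.sign (w i j) = Real.sign (w j i)) :
    ∃ a : Fin n → ℝ, (∀ i, 0 < a i) ∧
      (∀ i j, w i j * a i / a j = w j i * a j / a i) ∧
      (∀ i j, w i j * a i / a j = Real.sign (w i j) * Real.sqrt |w i j * w j i|) := by
  classical
  open Stmt3Aux in
  -- representative of the connected component of i
  have hrep : ∀ i : Fin n, (G w).Reachable (((G w).connectedComponentMk i).out) i := by
    intro i
    apply SimpleGraph.ConnectedComponent.exact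
    show (G w).connectedComponentMk _ = (G w).connectedComponentMk i
    exact Quot.out_eq _
  set rep : Fin n → Fin n := fun i => ((G w).connectedComponentMk i).out with hrepdef
  set a : Fin n → ℝ := fun i => wprod w (hrep i).some with hadef
  have hapos : ∀ i, 0 < a i := fun i => wprod_pos w _
  -- the key step equation
  have hstep : ∀ i j, (G w).Adj i j → a j = a i * f w i j := by
    intro i j hij
    have hc : rep j = rep i := by
      rw [hrepdef]
      simp only
      congr 1
      exact SimpleGraph.ConnectedComponent.sound hij.symm.reachable
    have p₁ : (G w).Walk (rep i) i := (hrep i).some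
    have hq : a j = wprod w (((hrep j).some).copy hc rfl) := by
      rw [hadef]
      simp only
      rw [wprod_copy]
    rw [hq]
    rw [wprod_eq w htrans (((hrep j).some).copy hc rfl)
      (((hrep i).some).append (SimpleGraph.Walk.cons hij SimpleGraph.Walk.nil))]
    rw [wprod_append, wprod_cons, wprod_nil, mul_one]
  -- third property
  have h3 : ∀ i j, w i j * a i / a j = Real.sign (w i j) * Real.sqrt |w i j * w j i| := by
    intro i j
    by_cases hij : i = j
    · subst hij
      rw [hdiag i]
      rw [mul_div_assoc, div_self (hapos i).ne']
      simp [Real.sign_one]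
    · by_cases hz : w i j = 0
      · have hz' : w j i = 0 := by
          have := hsign i j
          rw [hz, Real.sign_zero] at this
          exact Real.sign_eq_zero_iff.1 this.symm
        rw [hz, Real.sign_zero, zero_mul, zero_div, zero_mul]
      · have hz' : w j i ≠ 0 := by
          intro hc
          apply hz
          have := hsign i j
          rw [hc, Real.sign_zero] at this
          exact Real.sign_eq_zero_iff.1 this
        have hadj : (G w).Adj i j := ⟨hij, hz, hz'⟩
        have hs := hstep i j hadj
        rw [hs]
        have s1pos : (0:ℝ) < Real.sqrt |w i j| := Real.sqrt_pos.2 (abs_pos.2 hz)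
        have s2pos : (0:ℝ) < Real.sqrt |w j i| := Real.sqrt_pos.2 (abs_pos.2 hz')
        have hfpos : 0 < f w i j := f_pos w hz hz'
        have hsqrt : Real.sqrt |w i j * w j i| = Real.sqrt |w i j| * Real.sqrt |w j i| := by
          rw [abs_mul, Real.sqrt_mul (abs_nonneg _)]
        rw [hsqrt, f]
        have hs1sq : Real.sqrt |w i j| * Real.sqrt |w i j| = |w i j| :=
          Real.mul_self_sqrt (abs_nonneg _)
        have hsm : Real.sign (w i j) * |w i j| = w i j := Stmt3Aux.sign_mul_abs _
        have hane := (hapos i).ne'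
        calc w i j * a i / (a i * (Real.sqrt |w i j| / Real.sqrt |w j i|))
            = w i j * Real.sqrt |w j i| / Real.sqrt |w i j| := by
              field_simp
            _ = (Real.sign (w i j) * (Real.sqrt |w i j| * Real.sqrt |w i j|)) *
                Real.sqrt |w j i| / Real.sqrt |w i j| := by
              rw [hs1sq, hsm]
            _ = Real.sign (w i j) * (Real.sqrt |w i j| * Real.sqrt |w j i|) := by
              field_simp
  refine ⟨a, hapos, ?_, h3⟩
  intro i j
  rw [h3 i j, h3 j i, hsign i j, mul_comm (w j i) (w i j)]
end

section
/- If the network W can be rescaled into a symmetric matrix V by a positive vector a, then the quadratic function φ(x) = Σ_i a_i² x_i t_i − (1/2) Σ_i Σ_j x_i x_j a_i a_j v_{ij} satisfies ∂φ/∂x_i(x) = a_i² (t_i − Σ_j w_{ij} x_j) for every i, and hence for fixed x_{-i} the maximizer of φ over x_i ∈ [0, x̄_i] equals the best response b_i(x). -/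
open Set Finset

/-- If W is rescaled into a symmetric matrix V by a positive
vector a, the quadratic function
`φ(x) = ∑ i a_i² x_i t_i − (1/2) ∑ i ∑ j x_i x_j a_i a_j v_ij`
has i-th partial derivative `a_i² (t_i − ∑ j w_ij x_j)`, and for fixed x_{-i}
its maximizer over `[0, x̄ i]` is exactly the best response `b_i(x)`. -/
theorem stmt5 {n : ℕ} (w v : Fin n → Fin n → ℝ) (a t xbar : Fin n → ℝ)
    (hdiag : ∀ i, w i i = 1) (ha : ∀ i, 0 < a i)
    (hxbar : ∀ i, 0 < xbar i) (ht : ∀ i, t i ∈ Ioo 0 (xbar i))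
    (hv : ∀ i j, v i j = w i j * a i / a j) (hvsym : ∀ i j, v i j = v j i)
    (φ : (Fin n → ℝ) → ℝ)
    (hφ : ∀ y, φ y = ∑ i, (a i) ^ 2 * y i * t i
        - (1 / 2) * ∑ i, ∑ j, y i * y j * a i * a j * v i j)
    (x : Fin n → ℝ) (hx : ∀ j, x j ∈ Icc 0 (xbar j)) (i : Fin n) :
    (∀ s : ℝ, HasDerivAt (fun s => φ (Function.update x i s))
        ((a i) ^ 2 * (t i - (s + ∑ j ∈ univ.erase i, w i j * x j))) s) ∧
    {y | y ∈ Icc (0:ℝ) (xbar i) ∧ ∀ z ∈ Icc (0:ℝ) (xbar i),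
        φ (Function.update x i z) ≤ φ (Function.update x i y)}
      = {min (max (t i - ∑ j ∈ univ.erase i, w i j * x j) 0) (xbar i)} := by
  have hane : ∀ k, a k ≠ 0 := fun k => (ha k).ne'
  set S : ℝ := ∑ j ∈ univ.erase i, w i j * x j with hS
  set m : ℝ := t i - S with hm
  set C : ℝ := (∑ k ∈ univ.erase i, (a k)^2 * x k * t k)
       - (1/2) * ((∑ k ∈ univ.erase i, ∑ j ∈ univ.erase i,
          x k * x j * a k * a j * v k j) ) with hC
  clear_value S m C
  have hvi : v i i = 1 := by
    rw [hv i i, hdiag, one_mul, div_self (hane i)]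
  have hrep : ∀ s : ℝ, φ (Function.update x i s)
      = C + (a i)^2 * (m * s - s^2/2) := by
    intro s
    have hui : Function.update x i s i = s := Function.update_self i s x
    have hun : ∀ j : Fin n, j ≠ i → Function.update x i s j = x j :=
      fun j h => Function.update_of_ne h s x
    have e1 : ∑ k, (a k)^2 * Function.update x i s k * t k
        = (a i)^2 * s * t i + ∑ k ∈ univ.erase i, (a k)^2 * x k * t k := by
      rw [← Finset.add_sum_erase univ _ (mem_univ i), hui]
      congr 1
      exact Finset.sum_congr rfl fun k hk => by
        rw [hun k (Finset.ne_of_mem_erase hk)]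
    have e2 : ∑ k, ∑ j, Function.update x i s k * Function.update x i s j
          * a k * a j * v k j
        = s * s * (a i)^2 + 2 * (s * ((a i)^2 * S))
          + ∑ k ∈ univ.erase i, ∑ j ∈ univ.erase i,
              x k * x j * a k * a j * v k j := by
      rw [← Finset.add_sum_erase univ _ (mem_univ i)]
      have einner_i : ∑ j, Function.update x i s i * Function.update x i s j
            * a i * a j * v i j
          = s * s * (a i)^2 + s * ((a i)^2 * S) := by
        rw [← Finset.add_sum_erase univ _ (mem_univ i), hui, hvi]
        have hc : ∀ j ∈ univ.erase i,
            s * Function.update x i s j * a i * a j * v i j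
            = s * ((a i)^2 * (w i j * x j)) := by
          intro j hj
          rw [hun j (Finset.ne_of_mem_erase hj), hv]
          field_simp [hane j]
        rw [Finset.sum_congr rfl hc, ← Finset.mul_sum, ← Finset.mul_sum,
          ← hS]
        ring
      have einner_k : ∀ k ∈ univ.erase i,
          ∑ j, Function.update x i s k * Function.update x i s j
            * a k * a j * v k j
          = s * ((a i)^2 * (w i k * x k))
            + ∑ j ∈ univ.erase i, x k * x j * a k * a j * v k j := by
        intro k hk
        rw [← Finset.add_sum_erase univ _ (mem_univ i)]
        congr 1
        · rw [hun k (Finset.ne_of_mem_erase hk), hui, hvsym, hv]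
          field_simp [hane k]
        · exact Finset.sum_congr rfl fun j hj => by
            rw [hun k (Finset.ne_of_mem_erase hk),
              hun j (Finset.ne_of_mem_erase hj)]
      rw [einner_i, Finset.sum_congr rfl einner_k, Finset.sum_add_distrib,
        ← Finset.mul_sum]
      have : ∑ k ∈ univ.erase i, (a i)^2 * (w i k * x k)
          = (a i)^2 * S := by
        rw [hS, Finset.mul_sum]
      rw [this]
      ring
    rw [hφ, e1, e2, hC, hm]
    ring
  constructor
  · intro s
    have h1 : HasDerivAt (fun s : ℝ => m * s - s^2/2) (m - s) s := by
      have := ((hasDerivAt_id s).const_mul m).sub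
        ((hasDerivAt_pow 2 s).div_const 2)
      simp at this
      exact this
    have h2 : HasDerivAt (fun s : ℝ => C + (a i)^2 * (m * s - s^2/2))
        ((a i)^2 * (m - s)) s := (h1.const_mul ((a i)^2)).const_add C
    have heq : (fun s => φ (Function.update x i s))
        = fun s : ℝ => C + (a i)^2 * (m * s - s^2/2) := funext hrep
    rw [heq, show (a i)^2 * (t i - (s + S)) = (a i)^2 * (m - s) by
      rw [hm]; ring]
    exact h2
  · set p : ℝ := min (max m 0) (xbar i) with hp
    have hp0 : (0:ℝ) ≤ p := le_min (le_max_right m 0) (hxbar i).le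
    have hpB : p ≤ xbar i := min_le_right _ _
    have hproj : ∀ z ∈ Icc (0:ℝ) (xbar i),
        (p - m)^2 ≤ (z - m)^2 ∧ ((z - m)^2 ≤ (p - m)^2 → z = p) := by
      rintro z ⟨hz0, hz1⟩
      rcases le_total m 0 with h0 | h0
      · have hpe : p = 0 := by
          rw [hp, max_eq_right h0, min_eq_left (hxbar i).le]
        rw [hpe]
        constructor
        · nlinarith
        · intro h
          exact le_antisymm (by nlinarith) hz0
      · rcases le_total m (xbar i) with h1 | h1
        · have hpe : p = m := by
            rw [hp, max_eq_left h0, min_eq_left h1]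
          rw [hpe]
          constructor
          · nlinarith [sq_nonneg (z - m)]
          · intro h
            have : (z - m)^2 = 0 := le_antisymm (by simpa using h)
              (sq_nonneg _)
            have := (pow_eq_zero_iff two_ne_zero).mp this
            linarith [sub_eq_zero.mp this]
        · have hpe : p = xbar i := by
            rw [hp, max_eq_left h0, min_eq_right h1]
          rw [hpe]
          constructor
          · nlinarith
          · intro h
            exact le_antisymm hz1 (by nlinarith)
    have hcmp : ∀ y z : ℝ, φ (Function.update x i z)
        ≤ φ (Function.update x i y) ↔ (y - m)^2 ≤ (z - m)^2 := by
      intro y z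
      rw [hrep, hrep]
      have hpos : (0:ℝ) < (a i)^2 := pow_pos (ha i) 2
      constructor <;> intro h
      · have h2 : (a i)^2 * (m*z - z^2/2) ≤ (a i)^2 * (m*y - y^2/2) := by
          linarith
        have h3 := le_of_mul_le_mul_left h2 hpos
        have e1 : (y - m)^2 = y^2 - 2*m*y + m^2 := by ring
        have e2 : (z - m)^2 = z^2 - 2*m*z + m^2 := by ring
        rw [e1, e2]; linarith
      · have e1 : (y - m)^2 = y^2 - 2*m*y + m^2 := by ring
        have e2 : (z - m)^2 = z^2 - 2*m*z + m^2 := by ring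
        rw [e1, e2] at h
        have h3 : m*z - z^2/2 ≤ m*y - y^2/2 := by linarith
        have := mul_le_mul_of_nonneg_left h3 hpos.le
        linarith
    ext y
    simp only [Set.mem_setOf_eq, Set.mem_singleton_iff]
    constructor
    · rintro ⟨hy, hmax⟩
      exact (hproj y hy).2 ((hcmp y p).mp (hmax p ⟨hp0, hpB⟩))
    · rintro rfl
      exact ⟨⟨hp0, hpB⟩, fun z hz => (hcmp p z).mpr (hproj z hz).1⟩
end

section
/- A network W can be rescaled by a positive vector into a row diagonally dominant matrix (weak influences) if and only if its transpose W^⊤ can be rescaled by a positive vector into a row diagonally dominant matrix; equivalently, W is rescalable to have weak influences iff it is rescalable to have weak externalities. -/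
open Finset

lemma key {n : ℕ} (B : Fin n → Fin n → ℝ) (hB : ∀ i j, 0 ≤ B i j)
    (x : Fin n → ℝ) (hx : ∀ i, 0 < x i)
    (h : ∀ i, ∑ j, B i j * x j < x i) :
    ∃ y : Fin n → ℝ, (∀ i, 0 < y i) ∧ ∀ i, ∑ j, B j i * y j < y i := by
  rcases isEmpty_or_nonempty (Fin n) with hn | hn
  · exact ⟨fun _ => 1, fun i => (hn.elim i), fun i => (hn.elim i)⟩
  -- c : contraction factor
  set c : ℝ := Finset.univ.sup' (univ_nonempty) (fun i => (∑ j, B i j * x j) / x i) with hc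
  have hc1 : c < 1 := by
    refine (Finset.sup'_lt_iff _).mpr fun i _ => ?_
    exact (div_lt_one (hx i)).mpr (h i)
  have hc0 : 0 ≤ c := by
    obtain ⟨i⟩ := hn
    refine le_trans ?_ (Finset.le_sup' _ (mem_univ i))
    exact div_nonneg (Finset.sum_nonneg fun j _ => mul_nonneg (hB i j) (hx j).le) (hx i).le
  have hcb : ∀ i, ∑ j, B i j * x j ≤ c * x i := by
    intro i
    have := Finset.le_sup' (fun i => (∑ j, B i j * x j) / x i) (mem_univ i)
    calc ∑ j, B i j * x j = ((∑ j, B i j * x j) / x i) * x i :=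
          (div_mul_cancel₀ _ (hx i).ne').symm
      _ ≤ c * x i := mul_le_mul_of_nonneg_right this (hx i).le
  -- iterated column sums
  let t : ℕ → Fin n → ℝ := fun k => Nat.rec (fun _ => 1) (fun _ tk i => ∑ j, tk j * B j i) k
  have ht0 : ∀ i, t 0 i = 1 := fun i => rfl
  have hts : ∀ k i, t (k + 1) i = ∑ j, t k j * B j i := fun k i => rfl
  have htnn : ∀ k i, 0 ≤ t k i := by
    intro k
    induction k with
    | zero => intro i; rw [ht0]; norm_num
    | succ k ih =>
      intro i; rw [hts]
      exact Finset.sum_nonneg fun j _ => mul_nonneg (ih j) (hB j i)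
  have hu : ∀ k, ∑ i, t k i * x i ≤ c ^ k * ∑ i, x i := by
    intro k
    induction k with
    | zero => simp [ht0]
    | succ k ih =>
      calc ∑ i, t (k + 1) i * x i = ∑ j, t k j * (∑ i, B j i * x i) := by
            simp only [hts, Finset.sum_mul, Finset.mul_sum]
            rw [Finset.sum_comm]
            congr 1; ext j; congr 1; ext i; ring
        _ ≤ ∑ j, t k j * (c * x j) := by
            exact Finset.sum_le_sum fun j _ => mul_le_mul_of_nonneg_left (hcb j) (htnn k j)
        _ = c * ∑ j, t k j * x j := by rw [Finset.mul_sum]; congr 1; ext j; ring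
        _ ≤ c * (c ^ k * ∑ i, x i) := mul_le_mul_of_nonneg_left ih hc0
        _ = c ^ (k + 1) * ∑ i, x i := by ring
  have htb : ∀ k i, t k i ≤ c ^ k * ((∑ i, x i) / x i) := by
    intro k i
    have h1 : t k i * x i ≤ ∑ i', t k i' * x i' :=
      Finset.single_le_sum (f := fun i' => t k i' * x i')
        (fun i' _ => mul_nonneg (htnn k i') (le_of_lt (hx i'))) (mem_univ i)
    have h2 := le_trans h1 (hu k)
    rw [← mul_div_assoc, le_div_iff₀ (hx i)]
    exact h2
  have hsumm : ∀ i, Summable (fun k => t k i) := by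
    intro i
    apply Summable.of_nonneg_of_le (fun k => htnn k i) (fun k => htb k i)
    exact (summable_geometric_of_lt_one hc0 hc1).mul_right _
  refine ⟨fun i => ∑' k, t k i, ?_, ?_⟩
  · intro i
    have h1 : (1 : ℝ) ≤ ∑' k, t k i := by
      have := Summable.le_tsum (hsumm i) 0 (fun k _ => htnn k i)
      rwa [ht0] at this
    linarith
  · intro i
    have hswap : ∑ j, B j i * ∑' k, t k j = ∑' k, ∑ j, B j i * t k j := by
      calc ∑ j, B j i * ∑' k, t k j = ∑ j, ∑' k, B j i * t k j := by
            refine Finset.sum_congr rfl fun j _ => ?_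
            exact tsum_mul_left.symm
        _ = ∑' k, ∑ j, B j i * t k j :=
            (Summable.tsum_finsetSum (fun j _ => (hsumm j).mul_left (B j i))).symm
    rw [hswap]
    have h2 : ∀ k, ∑ j, B j i * t k j = t (k + 1) i := by
      intro k; rw [hts]; congr 1; ext j; ring
    simp only [h2]
    have h3 : ∑' k, t k i = t 0 i + ∑' k, t (k + 1) i := Summable.tsum_eq_zero_add (hsumm i)
    rw [ht0] at h3
    have h4 : (1 : ℝ) ≤ ∑' k, t k i := by
      have := Summable.le_tsum (hsumm i) 0 (fun k _ => htnn k i)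
      rwa [ht0] at this
    linarith

lemma sum_ite_erase {n : ℕ} (i : Fin n) (f : Fin n → ℝ) :
    ∑ j, (if j = i then 0 else f j) = ∑ j ∈ Finset.univ.erase i, f j := by
  rw [← Finset.add_sum_erase _ _ (mem_univ i), if_pos rfl, zero_add]
  exact Finset.sum_congr rfl fun j hj => if_neg (Finset.ne_of_mem_erase hj)

lemma sum_ite_erase' {n : ℕ} (i : Fin n) (f : Fin n → ℝ) :
    ∑ j, (if i = j then 0 else f j) = ∑ j ∈ Finset.univ.erase i, f j := by
  rw [← sum_ite_erase i f]
  exact Finset.sum_congr rfl fun j _ => by simp [eq_comm]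

lemma habs (u b c : ℝ) (hb : 0 < b) (hc : 0 < c) : |u * b / c| = |u| * b / c := by
  rw [abs_div, abs_mul, abs_of_pos hb, abs_of_pos hc]

/-- W is rescalable by a positive vector into a row diagonally
dominant matrix (weak influences) iff it is rescalable into a column diagonally
dominant matrix (weak externalities), i.e. iff its transpose is rescalable into
a row diagonally dominant matrix. -/
theorem stmt8 {n : ℕ} (w : Fin n → Fin n → ℝ) (hdiag : ∀ i, w i i = 1) :
    (∃ a : Fin n → ℝ, (∀ i, 0 < a i) ∧
        ∀ i, ∑ j ∈ Finset.univ.erase i, |w i j * a i / a j| < 1) ↔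
    (∃ a : Fin n → ℝ, (∀ i, 0 < a i) ∧
        ∀ i, ∑ j ∈ Finset.univ.erase i, |w j i * a j / a i| < 1) := by
  constructor
  · rintro ⟨a, hapos, ha⟩
    have hkey : ∀ i, ∑ j, (if j = i then 0 else |w i j|) * (a j)⁻¹ < (a i)⁻¹ := by
      intro i
      have h0 := ha i
      have h2 : ∀ j ∈ Finset.univ.erase i, |w i j * a i / a j| = a i * (|w i j| * (a j)⁻¹) := by
        intro j _
        rw [habs _ _ _ (hapos i) (hapos j)]
        field_simp
      rw [Finset.sum_congr rfl h2, ← Finset.mul_sum] at h0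
      have h3 : ∑ j ∈ Finset.univ.erase i, |w i j| * (a j)⁻¹ < (a i)⁻¹ := by
        rw [← one_div]
        exact (lt_div_iff₀ (hapos i)).mpr (by linarith [mul_comm (a i) (∑ j ∈ Finset.univ.erase i, |w i j| * (a j)⁻¹)])
      calc ∑ j, (if j = i then 0 else |w i j|) * (a j)⁻¹
          = ∑ j, (if j = i then 0 else |w i j| * (a j)⁻¹) := by
            refine Finset.sum_congr rfl fun j _ => ?_; split <;> simp
        _ = ∑ j ∈ Finset.univ.erase i, |w i j| * (a j)⁻¹ := sum_ite_erase _ _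
        _ < (a i)⁻¹ := h3
    obtain ⟨y, hy, hY⟩ := key (fun i j => if j = i then 0 else |w i j|)
      (fun i j => by split <;> [rfl; exact abs_nonneg _])
      (fun i => (a i)⁻¹) (fun i => inv_pos.mpr (hapos i)) hkey
    refine ⟨y, hy, fun i => ?_⟩
    have h1 : ∑ j ∈ Finset.univ.erase i, |w j i| * y j < y i := by
      have h0 := hY i
      simp only [ite_mul, zero_mul] at h0
      rwa [sum_ite_erase' i (fun j => |w j i| * y j)] at h0
    have h2 : ∀ j ∈ Finset.univ.erase i, |w j i * y j / y i| = |w j i| * y j / y i :=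
      fun j _ => habs _ _ _ (hy j) (hy i)
    rw [Finset.sum_congr rfl h2, ← Finset.sum_div]
    exact (div_lt_one (hy i)).mpr h1
  · rintro ⟨a, hapos, ha⟩
    have hkey : ∀ i, ∑ j, (if j = i then 0 else |w j i|) * a j < a i := by
      intro i
      have h0 := ha i
      have h2 : ∀ j ∈ Finset.univ.erase i, |w j i * a j / a i| = (|w j i| * a j) / a i :=
        fun j _ => habs _ _ _ (hapos j) (hapos i)
      rw [Finset.sum_congr rfl h2, ← Finset.sum_div, div_lt_one (hapos i)] at h0
      calc ∑ j, (if j = i then 0 else |w j i|) * a j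
          = ∑ j, (if j = i then 0 else |w j i| * a j) := by
            refine Finset.sum_congr rfl fun j _ => ?_; split <;> simp
        _ = ∑ j ∈ Finset.univ.erase i, |w j i| * a j := sum_ite_erase _ _
        _ < a i := h0
    obtain ⟨y, hy, hY⟩ := key (fun i j => if j = i then 0 else |w j i|)
      (fun i j => by split <;> [rfl; exact abs_nonneg _])
      a hapos hkey
    refine ⟨fun i => (y i)⁻¹, fun i => inv_pos.mpr (hy i), fun i => ?_⟩
    have h1 : ∑ j ∈ Finset.univ.erase i, |w i j| * y j < y i := by
      have h0 := hY i
      simp only [ite_mul, zero_mul] at h0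
      rwa [sum_ite_erase' i (fun j => |w i j| * y j)] at h0
    have h2 : ∀ j ∈ Finset.univ.erase i, |w i j * (y i)⁻¹ / (y j)⁻¹| = |w i j| * y j / y i := by
      intro j _
      rw [habs _ _ _ (inv_pos.mpr (hy i)) (inv_pos.mpr (hy j))]
      field_simp
    rw [Finset.sum_congr rfl h2, ← Finset.sum_div]
    exact (div_lt_one (hy i)).mpr h1
end

section
/- The best-response map of a directed network game is Lipschitz in any weighted maximum norm with constant ‖W − I_n‖_∞^u: for every u > 0 and all x, x' ∈ X, ‖b(x) − b(x')‖_∞^u ≤ ‖W − I_n‖_∞^u · ‖x − x'‖_∞^u. -/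
open Set Finset

/-- The best-response map of a directed network game is Lipschitz
in any weighted maximum norm, with constant `‖W − I‖_∞^u`. -/
theorem stmt10 {n : ℕ} (hn : 0 < n) (w : Fin n → Fin n → ℝ) (t xbar : Fin n → ℝ)
    (hdiag : ∀ i, w i i = 1) (hxbar : ∀ i, 0 < xbar i)
    (b : (Fin n → ℝ) → Fin n → ℝ)
    (hb : ∀ x i, b x i = min (max (t i - ∑ j ∈ univ.erase i, w i j * x j) 0) (xbar i))
    (u : Fin n → ℝ) (hu : ∀ i, 0 < u i)
    (x x' : Fin n → ℝ)
    (hx : ∀ j, x j ∈ Icc 0 (xbar j)) (hx' : ∀ j, x' j ∈ Icc 0 (xbar j)) :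
    (⨆ i, |b x i - b x' i| / u i) ≤
      (⨆ i, (∑ j, |w i j - (if j = i then 1 else 0)| * u j) / u i) *
        ⨆ i, |x i - x' i| / u i := by
  haveI : Nonempty (Fin n) := ⟨⟨0, hn⟩⟩
  set L := ⨆ i, (∑ j, |w i j - (if j = i then 1 else 0)| * u j) / u i with hL
  set D := ⨆ i, |x i - x' i| / u i with hD
  have bddD : BddAbove (Set.range fun i => |x i - x' i| / u i) :=
    (Set.finite_range _).bddAbove
  have bddL : BddAbove (Set.range fun i =>
      (∑ j, |w i j - (if j = i then 1 else 0)| * u j) / u i) :=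
    (Set.finite_range _).bddAbove
  have hD0 : 0 ≤ D := le_trans (div_nonneg (abs_nonneg _) (hu _).le)
    (le_ciSup bddD (Classical.arbitrary (Fin n)))
  have hxd : ∀ j, |x j - x' j| ≤ u j * D := by
    intro j
    have := le_ciSup bddD j
    rw [div_le_iff₀ (hu j)] at this
    linarith [this]
  refine ciSup_le fun i => ?_
  have hclamp : |b x i - b x' i| ≤
      |(∑ j ∈ univ.erase i, w i j * x' j) - ∑ j ∈ univ.erase i, w i j * x j| := by
    rw [hb, hb]
    refine le_trans (abs_min_sub_min_le_max _ _ _ _) (max_le ?_ ?_)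
    · refine le_trans (abs_max_sub_max_le_max _ _ _ _) (max_le ?_ ?_)
      · rw [show (t i - ∑ j ∈ univ.erase i, w i j * x j) -
            (t i - ∑ j ∈ univ.erase i, w i j * x' j) =
            (∑ j ∈ univ.erase i, w i j * x' j) - ∑ j ∈ univ.erase i, w i j * x j by ring]
      · simp [abs_nonneg]
    · simp [abs_nonneg]
  have hsum : |(∑ j ∈ univ.erase i, w i j * x' j) - ∑ j ∈ univ.erase i, w i j * x j|
      ≤ (∑ j, |w i j - (if j = i then 1 else 0)| * u j) * D := by
    rw [← Finset.sum_sub_distrib]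
    refine le_trans (Finset.abs_sum_le_sum_abs _ _) ?_
    have : ∑ j, |w i j - (if j = i then 1 else 0)| * u j * D
        = ∑ j ∈ univ.erase i, |w i j - (if j = i then 1 else 0)| * u j * D :=
      (Finset.sum_erase _ (by simp [hdiag i])).symm
    rw [Finset.sum_mul, this]
    refine Finset.sum_le_sum fun j hj => ?_
    have hji : j ≠ i := (Finset.mem_erase.mp hj).1
    rw [if_neg hji, sub_zero]
    calc |w i j * x' j - w i j * x j| = |w i j| * |x' j - x j| := by
          rw [← abs_mul]; ring_nf
      _ ≤ |w i j| * (u j * D) := by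
          rw [abs_sub_comm]; exact mul_le_mul_of_nonneg_left (hxd j) (abs_nonneg _)
      _ = |w i j| * u j * D := by ring
  have hterm : (∑ j, |w i j - (if j = i then 1 else 0)| * u j) / u i ≤ L :=
    le_ciSup bddL i
  have hsum0 : 0 ≤ ∑ j, |w i j - (if j = i then 1 else 0)| * u j :=
    Finset.sum_nonneg fun j _ => mul_nonneg (abs_nonneg _) (hu j).le
  calc |b x i - b x' i| / u i
      ≤ ((∑ j, |w i j - (if j = i then 1 else 0)| * u j) * D) / u i := by
        gcongr
        · exact (hu i).le
        · exact hclamp.trans hsum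
    _ = ((∑ j, |w i j - (if j = i then 1 else 0)| * u j) / u i) * D := by ring
    _ ≤ L * D := mul_le_mul_of_nonneg_right hterm hD0
end

section
/- If ρ(|W| − I_n) < 1 (equivalently, if W is rescalable to a row diagonally dominant matrix), then the directed network game on W has a unique Nash equilibrium, i.e., the best-response map b : X → X has a unique fixed point. -/
open Set Finset

attribute [local instance] Matrix.linftyOpNormedRing Matrix.linftyOpNormedAlgebra

private lemma stmt12_pow_nonneg {n : ℕ} (M : Matrix (Fin n) (Fin n) ℝ)
    (hM : ∀ i j, 0 ≤ M i j) : ∀ (k : ℕ) i j, 0 ≤ (M ^ k) i j := by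
  intro k
  induction k with
  | zero => intro i j; simp only [pow_zero, Matrix.one_apply]; split <;> norm_num
  | succ k ih =>
    intro i j
    rw [pow_succ, Matrix.mul_apply]
    exact Finset.sum_nonneg fun l _ => mul_nonneg (ih i l) (hM l j)

private lemma stmt12_iter {n : ℕ} (M : Matrix (Fin n) (Fin n) ℝ) (hM : ∀ i j, 0 ≤ M i j)
    (f : (Fin n → ℝ) → Fin n → ℝ)
    (hf : ∀ x y i, |f x i - f y i| ≤ ∑ j, M i j * |x j - y j|) :
    ∀ (k : ℕ) x y i, |f^[k] x i - f^[k] y i| ≤ ∑ j, (M ^ k) i j * |x j - y j| := by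
  intro k
  induction k with
  | zero => intro x y i; simp [Matrix.one_apply, ite_mul]
  | succ k ih =>
    intro x y i
    rw [Function.iterate_succ_apply', Function.iterate_succ_apply']
    calc |f (f^[k] x) i - f (f^[k] y) i|
        ≤ ∑ j, M i j * |f^[k] x j - f^[k] y j| := hf _ _ i
      _ ≤ ∑ j, M i j * ∑ l, (M ^ k) j l * |x l - y l| :=
          Finset.sum_le_sum fun j _ => mul_le_mul_of_nonneg_left (ih x y j) (hM i j)
      _ = ∑ l, (M ^ (k+1)) i l * |x l - y l| := by
          simp_rw [pow_succ', Matrix.mul_apply, Finset.mul_sum, Finset.sum_mul]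
          rw [Finset.sum_comm]
          congr 1; ext l; congr 1; ext j; ring


/-- If the spectral radius of |W| − I is < 1 (all complex
eigenvalues have modulus < 1), then the directed network game on W has a
unique Nash equilibrium (unique fixed point of the best-response map in X). -/
theorem stmt12 {n : ℕ} (w : Fin n → Fin n → ℝ) (t xbar : Fin n → ℝ)
    (hdiag : ∀ i, w i i = 1) (hxbar : ∀ i, 0 < xbar i)
    (ht : ∀ i, t i ∈ Ioo 0 (xbar i))
    (hρ : ∀ (lam : ℂ) (z : Fin n → ℂ), z ≠ 0 →
      (Matrix.of (fun i j : Fin n => ((|w i j| - if i = j then 1 else 0 : ℝ) : ℂ))).mulVec z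
        = lam • z → ‖lam‖ < 1)
    (b : (Fin n → ℝ) → Fin n → ℝ)
    (hb : ∀ x i, b x i = min (max (t i - ∑ j ∈ univ.erase i, w i j * x j) 0) (xbar i)) :
    ∃! x : Fin n → ℝ, (∀ i, x i ∈ Icc 0 (xbar i)) ∧ b x = x := by
  rcases Nat.eq_zero_or_pos n with hn | hn
  · subst hn
    exact ⟨fun i => i.elim0, ⟨fun i => i.elim0, funext fun i => i.elim0⟩,
      fun y _ => funext fun i => i.elim0⟩
  -- the real matrix M = |W| - I
  set M : Matrix (Fin n) (Fin n) ℝ :=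
    Matrix.of (fun i j => |w i j| - if i = j then 1 else 0) with hMdef
  have hMnn : ∀ i j, 0 ≤ M i j := by
    intro i j
    by_cases hij : i = j
    · subst hij; simp [hMdef, hdiag i]
    · simp [hMdef, hij, abs_nonneg]
  -- the complex matrix
  set A : Matrix (Fin n) (Fin n) ℂ :=
    Matrix.of (fun i j : Fin n => ((|w i j| - if i = j then 1 else 0 : ℝ) : ℂ)) with hAdef
  have hAmap : A = Complex.ofRealHom.mapMatrix M := by
    ext i j; simp [hAdef, hMdef]
  have hAk : ∀ (k : ℕ) i j, (A ^ k) i j = ((M ^ k) i j : ℂ) := by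
    intro k i j
    rw [hAmap, ← map_pow]
    rfl
  -- every element of the spectrum of A has modulus < 1
  have hspec : ∀ lam ∈ spectrum ℂ A, ‖lam‖₊ < 1 := by
    intro lam hlam
    rw [spectrum.mem_iff, Matrix.isUnit_iff_isUnit_det, isUnit_iff_ne_zero, not_not,
      ← Matrix.exists_mulVec_eq_zero_iff] at hlam
    obtain ⟨v, hv, hv0⟩ := hlam
    have halg : (algebraMap ℂ (Matrix (Fin n) (Fin n) ℂ)) lam
        = lam • (1 : Matrix (Fin n) (Fin n) ℂ) := by
      simp [Algebra.algebraMap_eq_smul_one]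
    rw [halg, Matrix.sub_mulVec, Matrix.smul_mulVec, Matrix.one_mulVec,
      sub_eq_zero] at hv0
    have := hρ lam v hv hv0.symm
    rw [← NNReal.coe_lt_one, coe_nnnorm]
    simpa using this
  -- Gelfand: some power has small norm
  haveI : NeZero n := ⟨hn.ne'⟩
  have hrad : spectralRadius ℂ A < 1 := by
    simpa using spectrum.spectralRadius_lt_of_forall_lt A hspec
  have hev :=
    (spectrum.pow_nnnorm_pow_one_div_tendsto_nhds_spectralRadius A).eventually_lt_const hrad
  obtain ⟨k, hk⟩ := hev.exists
  set K : NNReal := ‖A ^ k‖₊ with hKdef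
  have hK1 : K < 1 := by
    rw [← ENNReal.coe_lt_one_iff]
    by_contra hle
    push_neg at hle
    have h2 : (1 : ENNReal) ^ (1/(k:ℝ)) ≤ (‖A ^ k‖₊ : ENNReal) ^ (1/(k:ℝ)) :=
      ENNReal.rpow_le_rpow hle (by positivity)
    rw [ENNReal.one_rpow] at h2
    exact absurd hk (not_lt.mpr h2)
  have hK1' : (K : ℝ) < 1 := by exact_mod_cast hK1
  -- row sums of M^k are bounded by K
  have hrow : ∀ i, ∑ j, (M ^ k) i j ≤ (K : ℝ) := by
    intro i
    have h1 : (∑ j, ‖(A ^ k) i j‖₊) ≤ ‖A ^ k‖₊ := by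
      rw [Matrix.linfty_opNNNorm_def]
      exact Finset.le_sup (f := fun i => ∑ j, ‖(A ^ k) i j‖₊) (Finset.mem_univ i)
    calc ∑ j, (M ^ k) i j = ∑ j, ‖(A ^ k) i j‖ := by
          refine Finset.sum_congr rfl fun j _ => ?_
          rw [hAk k i j, Complex.norm_real, Real.norm_eq_abs,
            abs_of_nonneg (stmt12_pow_nonneg M hMnn k i j)]
      _ = ((∑ j, ‖(A ^ k) i j‖₊ : NNReal) : ℝ) := by push_cast; rfl
      _ ≤ (K : ℝ) := by exact_mod_cast h1
  -- one-step Lipschitz bound for b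
  have hlip : ∀ x y i, |b x i - b y i| ≤ ∑ j, M i j * |x j - y j| := by
    intro x y i
    rw [hb, hb]
    have e1 : |min (max (t i - ∑ j ∈ univ.erase i, w i j * x j) 0) (xbar i)
        - min (max (t i - ∑ j ∈ univ.erase i, w i j * y j) 0) (xbar i)|
        ≤ |(t i - ∑ j ∈ univ.erase i, w i j * x j)
            - (t i - ∑ j ∈ univ.erase i, w i j * y j)| := by
      refine (abs_min_sub_min_le_max _ _ _ _).trans ?_
      simp only [sub_self, abs_zero]
      rw [max_eq_left (abs_nonneg _)]
      exact abs_max_sub_max_le_abs _ _ _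
    refine e1.trans ?_
    have e2 : (t i - ∑ j ∈ univ.erase i, w i j * x j)
        - (t i - ∑ j ∈ univ.erase i, w i j * y j)
        = ∑ j ∈ univ.erase i, w i j * (y j - x j) := by
      simp only [mul_sub]
      rw [Finset.sum_sub_distrib]
      ring
    rw [e2]
    calc |∑ j ∈ univ.erase i, w i j * (y j - x j)|
        ≤ ∑ j ∈ univ.erase i, |w i j * (y j - x j)| := Finset.abs_sum_le_sum_abs _ _
      _ = ∑ j ∈ univ.erase i, |w i j| * |x j - y j| := by
          refine Finset.sum_congr rfl fun j _ => ?_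
          rw [abs_mul, abs_sub_comm]
      _ = ∑ j, M i j * |x j - y j| := by
          rw [← Finset.sum_erase_add _ _ (Finset.mem_univ i)]
          have : M i i * |x i - y i| = 0 := by simp [hMdef, hdiag i]
          rw [this, add_zero]
          refine Finset.sum_congr rfl fun j hj => ?_
          have hji : i ≠ j := fun h => (Finset.mem_erase.mp hj).1 h.symm
          simp [hMdef, hji]
  -- iterated bound
  have hiter := stmt12_iter M hMnn b hlip k
  -- distance estimate
  have hdist : ∀ x y : Fin n → ℝ, dist (b^[k] x) (b^[k] y) ≤ (K : ℝ) * dist x y := by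
    intro x y
    rw [dist_pi_le_iff (by positivity)]
    intro i
    rw [Real.dist_eq]
    calc |b^[k] x i - b^[k] y i| ≤ ∑ j, (M ^ k) i j * |x j - y j| := hiter x y i
      _ ≤ ∑ j, (M ^ k) i j * dist x y := by
          refine Finset.sum_le_sum fun j _ => ?_
          refine mul_le_mul_of_nonneg_left ?_ (stmt12_pow_nonneg M hMnn k i j)
          rw [← Real.dist_eq]
          exact dist_le_pi_dist x y j
      _ = (∑ j, (M ^ k) i j) * dist x y := by rw [Finset.sum_mul]
      _ ≤ (K : ℝ) * dist x y := mul_le_mul_of_nonneg_right (hrow i) dist_nonneg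
  -- the compact convex set as a subtype
  set S : Set (Fin n → ℝ) := Set.pi Set.univ fun i => Icc 0 (xbar i) with hSdef
  have hSc : IsClosed S := isClosed_set_pi fun i _ => isClosed_Icc
  haveI : CompleteSpace S := hSc.completeSpace_coe
  haveI : Nonempty S := ⟨⟨fun _ => 0, fun i _ => ⟨le_rfl, (hxbar i).le⟩⟩⟩
  have hbmem : ∀ x (i : Fin n), b x i ∈ Icc 0 (xbar i) := by
    intro x i
    rw [hb]
    exact ⟨le_min (le_max_right _ _) (hxbar i).le, min_le_right _ _⟩
  set B : S → S := fun x => ⟨b x, fun i _ => hbmem x i⟩ with hBdef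
  have hBval : ∀ (m : ℕ) (x : S), ((B^[m]) x : Fin n → ℝ) = b^[m] (x : Fin n → ℝ) := by
    intro m
    induction m with
    | zero => intro x; simp
    | succ m ih =>
      intro x
      rw [Function.iterate_succ_apply', Function.iterate_succ_apply', ← ih x]
  have hlipB : LipschitzWith K (B^[k]) := by
    apply LipschitzWith.of_dist_le_mul
    intro x y
    rw [Subtype.dist_eq, Subtype.dist_eq, hBval k x, hBval k y]
    exact hdist _ _
  have hcontr : ContractingWith K (B^[k]) := ⟨hK1, hlipB⟩
  set x₀ : S := hcontr.fixedPoint (B^[k]) with hx₀def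
  have hfixk : (B^[k]) x₀ = x₀ := hcontr.fixedPoint_isFixedPt
  have hfixB : B x₀ = x₀ := by
    have hcomm : (B^[k]) (B x₀) = B x₀ := by
      rw [← Function.iterate_succ_apply, Function.iterate_succ_apply', hfixk]
    have := hcontr.fixedPoint_unique hcomm
    rw [this, ← hcontr.fixedPoint_unique hfixk]
  refine ⟨(x₀ : Fin n → ℝ), ⟨fun i => x₀.2 i (Set.mem_univ i), ?_⟩, ?_⟩
  · exact congrArg Subtype.val hfixB
  · rintro y ⟨hymem, hyfix⟩
    have hyk : b^[k] y = y := Function.iterate_fixed hyfix k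
    have hxk : b^[k] (x₀ : Fin n → ℝ) = (x₀ : Fin n → ℝ) :=
      Function.iterate_fixed (congrArg Subtype.val hfixB) k
    have := hdist y (x₀ : Fin n → ℝ)
    rw [hyk, hxk] at this
    have hd : dist y (x₀ : Fin n → ℝ) = 0 := by
      nlinarith [dist_nonneg (x := y) (y := (x₀ : Fin n → ℝ))]
    exact dist_eq_zero.mp hd
end

section
/- Suppose a > 0 is a scaling vector such that Σ_{j≠i} a_j |w_{ji}| < a_i for every i (W is rescaled into weak externalities). Then the function φ'(x) = −Σ_i a_i |x_i − b_i(x)| is a best-response potential: for every player i and every fixed x_{-i}, the set of maximizers of x_i ↦ φ'(x_i, x_{-i}) over [0, x̄_i] equals the singleton {b_i(x)}. -/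
open Set Finset

/-- If ∑_{j≠i} a_j |w_ji| < a_i for all i (weak externalities
after rescaling), then φ'(x) = −∑ i a_i |x_i − b_i(x)| is a best-response
potential: for every player i and profile x, the set of maximizers of
x_i ↦ φ'(x_i, x_{-i}) over [0, x̄ i] is exactly {b_i(x)}. -/
theorem stmt17 {n : ℕ} (w : Fin n → Fin n → ℝ) (t xbar a : Fin n → ℝ)
    (hdiag : ∀ i, w i i = 1) (hxbar : ∀ i, 0 < xbar i)
    (ht : ∀ i, t i ∈ Ioo 0 (xbar i)) (ha : ∀ i, 0 < a i)
    (hweak : ∀ i, ∑ j ∈ univ.erase i, a j * |w j i| < a i)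
    (b : (Fin n → ℝ) → Fin n → ℝ)
    (hb : ∀ x i, b x i = min (max (t i - ∑ j ∈ univ.erase i, w i j * x j) 0) (xbar i))
    (φ' : (Fin n → ℝ) → ℝ)
    (hφ' : ∀ y, φ' y = -∑ i, a i * |y i - b y i|)
    (x : Fin n → ℝ) (hx : ∀ j, x j ∈ Icc 0 (xbar j)) (i : Fin n) :
    {y | y ∈ Icc (0:ℝ) (xbar i) ∧ ∀ z ∈ Icc (0:ℝ) (xbar i),
        φ' (Function.update x i z) ≤ φ' (Function.update x i y)} = {b x i} := by
  set bi := b x i with hbi_def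
  set S := ∑ j ∈ univ.erase i, a j * |w j i| with hS_def
  have hbi_mem : bi ∈ Icc (0:ℝ) (xbar i) := by
    rw [hbi_def, hb]
    exact ⟨le_min (le_max_right _ _) (hxbar i).le, min_le_right _ _⟩
  -- b of updated profile at coordinate i is always bi
  have hbind : ∀ z : ℝ, b (Function.update x i z) i = bi := by
    intro z
    rw [hbi_def, hb, hb]
    congr 3
    refine Finset.sum_congr rfl (fun j hj => ?_)
    rw [Function.update_of_ne (Finset.ne_of_mem_erase hj)]
  -- Lipschitz property of b at coordinates j ≠ i
  have hlip : ∀ (z y : ℝ) (j : Fin n), j ≠ i →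
      |b (Function.update x i z) j - b (Function.update x i y) j| ≤ |w j i| * |z - y| := by
    intro z y j hj
    rw [hb, hb]
    set A := t j - ∑ k ∈ univ.erase j, w j k * Function.update x i z k with hA
    set B := t j - ∑ k ∈ univ.erase j, w j k * Function.update x i y k with hB
    have hAB : A - B = w j i * (y - z) := by
      rw [hA, hB]
      have : (∑ k ∈ univ.erase j, w j k * Function.update x i y k)
          - (∑ k ∈ univ.erase j, w j k * Function.update x i z k)
          = w j i * (y - z) := by
        rw [← Finset.sum_sub_distrib]
        rw [Finset.sum_eq_single i]
        · simp [mul_sub]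
        · intro k hk hki
          rw [Function.update_of_ne hki, Function.update_of_ne hki, sub_self]
        · intro h
          exact absurd (Finset.mem_erase.mpr ⟨fun e => hj e.symm, Finset.mem_univ i⟩) h
      linarith
    have h1 : |max A 0 - max B 0| ≤ |A - B| := by
      have := abs_max_sub_max_le_max A 0 B 0
      simpa using this
    have h2 : |min (max A 0) (xbar j) - min (max B 0) (xbar j)| ≤ |max A 0 - max B 0| := by
      have := abs_min_sub_min_le_max (max A 0) (xbar j) (max B 0) (xbar j)
      simpa using this
    calc |min (max A 0) (xbar j) - min (max B 0) (xbar j)|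
        ≤ |A - B| := le_trans h2 h1
      _ = |w j i| * |z - y| := by rw [hAB, abs_mul, abs_sub_comm y z]
  -- decomposition of φ'
  have hsum : ∀ z : ℝ, φ' (Function.update x i z)
      = -(a i * |z - bi| + ∑ j ∈ univ.erase i,
          a j * |x j - b (Function.update x i z) j|) := by
    intro z
    rw [hφ', ← Finset.add_sum_erase _ _ (Finset.mem_univ i)]
    congr 2
    · rw [Function.update_self, hbind]
    · refine Finset.sum_congr rfl (fun j hj => ?_)
      rw [Function.update_of_ne (Finset.ne_of_mem_erase hj)]
  -- the key inequality
  have hkey : ∀ y : ℝ, φ' (Function.update x i y)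
      ≤ φ' (Function.update x i bi) - (a i - S) * |y - bi| := by
    intro y
    rw [hsum y, hsum bi]
    have hTsub : ∑ j ∈ univ.erase i, a j * |x j - b (Function.update x i bi) j|
        - ∑ j ∈ univ.erase i, a j * |x j - b (Function.update x i y) j|
        ≤ S * |y - bi| := by
      rw [← Finset.sum_sub_distrib, hS_def, Finset.sum_mul]
      refine Finset.sum_le_sum (fun j hj => ?_)
      have hj' : j ≠ i := Finset.ne_of_mem_erase hj
      have h1 : |x j - b (Function.update x i bi) j| - |x j - b (Function.update x i y) j|
          ≤ |b (Function.update x i y) j - b (Function.update x i bi) j| := by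
        have := abs_sub_abs_le_abs_sub (x j - b (Function.update x i bi) j)
          (x j - b (Function.update x i y) j)
        calc |x j - b (Function.update x i bi) j| - |x j - b (Function.update x i y) j|
            ≤ |(x j - b (Function.update x i bi) j) - (x j - b (Function.update x i y) j)| := this
          _ = |b (Function.update x i y) j - b (Function.update x i bi) j| := by
              ring_nf
      have h2 := hlip y bi j hj'
      have := mul_le_mul_of_nonneg_left (le_trans h1 h2) (ha j).le
      calc a j * |x j - b (Function.update x i bi) j|
            - a j * |x j - b (Function.update x i y) j|
          = a j * (|x j - b (Function.update x i bi) j|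
            - |x j - b (Function.update x i y) j|) := by ring
        _ ≤ a j * (|w j i| * |y - bi|) := this
        _ = a j * |w j i| * |y - bi| := by ring
    have h0 : a i * |bi - bi| = 0 := by simp
    linarith [hTsub]
  -- conclude
  ext y
  simp only [Set.mem_setOf_eq, Set.mem_singleton_iff]
  constructor
  · rintro ⟨hy, hmax⟩
    have h1 := hmax bi hbi_mem
    have h2 := hkey y
    have hc : 0 < a i - S := by
      have := hweak i; rw [hS_def]; linarith
    have : (a i - S) * |y - bi| ≤ 0 := by linarith
    have : |y - bi| ≤ 0 := nonpos_of_mul_nonpos_right ?_ hc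
    · have := abs_nonneg (y - bi)
      have hz : |y - bi| = 0 := le_antisymm ‹|y - bi| ≤ 0› this
      have := abs_eq_zero.mp hz
      linarith
    · linarith
  · rintro rfl
    refine ⟨hbi_mem, fun z hz => ?_⟩
    have h2 := hkey z
    have hc : 0 ≤ (a i - S) * |z - bi| :=
      mul_nonneg (by have := hweak i; rw [hS_def]; linarith) (abs_nonneg _)
    linarith
end
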